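/- arXiv:1011.1797 — 2 statements merged into one kernel-verified Lean document; each statement's English description precedes it below -/
import Mathlib

section
/- Let Γ = (V,E) be a reflexive locally-finite k-separable graph and let X be a k-fragment of Γ. Then ∂⁻(∇(X)) = ∂(X), where ∇(X) = V \ Γ(X) and ∂⁻ is the boundary in the reverse graph. -/
open Set

/-- Image of a set under a relation (graph). -/
def RelImage {V : Type*} (Γ : V → V → Prop) (X : Set V) : Set V := {y | ∃ x ∈ X, Γ x y}

/-- Reverse relation. -/
def RelRev {V : Type*} (Γ : V → V → Prop) : V → V → Prop := fun x y => Γ y x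

/-- Boundary ∂(X) = Γ(X) \ X. -/
def RelBoundary {V : Type*} (Γ : V → V → Prop) (X : Set V) : Set V := RelImage Γ X \ X

/-- Exterior ∇(X) = V \ Γ(X). -/
def RelNabla {V : Type*} (Γ : V → V → Prop) (X : Set V) : Set V := (RelImage Γ X)ᶜ

def RelReflexive {V : Type*} (Γ : V → V → Prop) : Prop := ∀ x, Γ x x

def RelLocallyFinite {V : Type*} (Γ : V → V → Prop) : Prop :=
  ∀ x : V, (RelImage Γ {x}).Finite ∧ (RelImage (RelRev Γ) {x}).Finite

/-- The family S_k(Γ): finite X with |X| ≥ k and at least k vertices outside Γ(X). -/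
def SkFam {V : Type*} (Γ : V → V → Prop) (k : ℕ) : Set (Set V) :=
  {X | X.Finite ∧ k ≤ X.ncard ∧ ∃ Y : Set V, Y.Finite ∧ Y.ncard = k ∧ Y ⊆ RelNabla Γ X}

def RelSeparable {V : Type*} (Γ : V → V → Prop) (k : ℕ) : Prop := (SkFam Γ k).Nonempty

/-- The k-isoperimetric connectivity κ_k(Γ). -/
noncomputable def relKappa {V : Type*} (Γ : V → V → Prop) (k : ℕ) : ℕ :=
  sInf ((fun X => (RelBoundary Γ X).ncard) '' SkFam Γ k)

def IsKFragment {V : Type*} (Γ : V → V → Prop) (k : ℕ) (X : Set V) : Prop :=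
  X ∈ SkFam Γ k ∧ (RelBoundary Γ X).ncard = relKappa Γ k

def IsKAtom {V : Type*} (Γ : V → V → Prop) (k : ℕ) (X : Set V) : Prop :=
  IsKFragment Γ k X ∧ ∀ Y, IsKFragment Γ k Y → X.ncard ≤ Y.ncard

/-- Γ is k-faithful: every k-atom A satisfies |A| ≤ |V \ Γ(A)|. -/
def KFaithful {V : Type*} (Γ : V → V → Prop) (k : ℕ) : Prop :=
  ∀ A, IsKAtom Γ k A → (RelNabla Γ A).Infinite ∨ A.ncard ≤ (RelNabla Γ A).ncard

section

variable {V : Type*} {Γ : V → V → Prop} {k : ℕ} {X : Set V} {y : V}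

lemma relImage_finite (hlf : RelLocallyFinite Γ) (hX : X.Finite) : (RelImage Γ X).Finite := by
  have h : RelImage Γ X = ⋃ x ∈ X, RelImage Γ {x} := by
    ext z; simp [RelImage]
  rw [h]
  exact hX.biUnion fun x _ => (hlf x).1

lemma relImage_insert_of_forall (hy : ∀ z, Γ y z → z ∈ RelImage Γ X) :
    RelImage Γ (insert y X) = RelImage Γ X := by
  ext z
  constructor
  · rintro ⟨x, rfl | hx, hxz⟩
    · exact hy z hxz
    · exact ⟨x, hx, hxz⟩
  · rintro ⟨x, hx, hxz⟩
    exact ⟨x, Or.inr hx, hxz⟩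

lemma relBoundary_insert_of_forall (hy : ∀ z, Γ y z → z ∈ RelImage Γ X) :
    RelBoundary Γ (insert y X) = RelBoundary Γ X \ {y} := by
  rw [RelBoundary, RelBoundary, relImage_insert_of_forall hy, Set.insert_eq, Set.union_comm,
    ← Set.sdiff_sdiff]

lemma insert_mem_skFam (hX : X ∈ SkFam Γ k) (hy : ∀ z, Γ y z → z ∈ RelImage Γ X) :
    insert y X ∈ SkFam Γ k := by
  obtain ⟨hXfin, hXk, Y, hYfin, hYk, hYsub⟩ := hX
  refine ⟨hXfin.insert y, hXk.trans (Set.ncard_le_ncard (Set.subset_insert y X) (hXfin.insert y)),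
    Y, hYfin, hYk, ?_⟩
  rwa [RelNabla, relImage_insert_of_forall hy]

lemma relKappa_le_ncard_relBoundary (hX : X ∈ SkFam Γ k) :
    relKappa Γ k ≤ (RelBoundary Γ X).ncard :=
  Nat.sInf_le ⟨X, hX, rfl⟩

lemma relBoundary_rev_relNabla_subset :
    RelBoundary (RelRev Γ) (RelNabla Γ X) ⊆ RelBoundary Γ X := by
  rintro y ⟨⟨z, hz, hzy⟩, hy⟩
  exact ⟨not_not.mp hy, fun hyX => hz ⟨y, hyX, hzy⟩⟩

/-- Otherwise adding `y` to `X` keeps `Γ(X)`, hence stays in `S_k`, and removes `y` from the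
boundary, contradicting the minimality of `|∂(X)|`. -/
lemma IsKFragment.exists_rel_mem_relNabla (hlf : RelLocallyFinite Γ) (hX : IsKFragment Γ k X)
    (hy : y ∈ RelBoundary Γ X) : ∃ z, Γ y z ∧ z ∈ RelNabla Γ X := by
  by_contra! hno
  have hout : ∀ z, Γ y z → z ∈ RelImage Γ X := fun z hz => not_not.mp (hno z hz)
  have hle := relKappa_le_ncard_relBoundary (insert_mem_skFam hX.1 hout)
  have hfin : (RelBoundary Γ X).Finite :=
    (relImage_finite hlf hX.1.1).subset Set.sdiff_subset
  have hlt := Set.ncard_sdiff_singleton_lt_of_mem hy hfin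
  rw [relBoundary_insert_of_forall hout, hX.2.symm] at hle
  omega

end

theorem stmt2_general {V : Type*} (Γ : V → V → Prop) (k : ℕ)
    (hlf : RelLocallyFinite Γ)
    (X : Set V) (hX : IsKFragment Γ k X) :
    RelBoundary (RelRev Γ) (RelNabla Γ X) = RelBoundary Γ X := by
  refine relBoundary_rev_relNabla_subset.antisymm fun y hy => ?_
  obtain ⟨z, hyz, hz⟩ := hX.exists_rel_mem_relNabla hlf hy
  exact ⟨⟨z, hz, hyz⟩, fun hyN => hyN hy.1⟩

theorem stmt2 {V : Type*} (Γ : V → V → Prop) (k : ℕ)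
    (hrefl : RelReflexive Γ) (hlf : RelLocallyFinite Γ) (hsep : RelSeparable Γ k)
    (X : Set V) (hX : IsKFragment Γ k X) :
    RelBoundary (RelRev Γ) (RelNabla Γ X) = RelBoundary Γ X :=
  stmt2_general Γ k hlf X hX
end

section
/- Let G be an abelian group and S a finite generating subset with 0 ∈ S which is 2-separable with κ₂(S) ≤ |S| − 1. If H is a 2-atom of S with 0 ∈ H and |H| ≥ 3, then H is a subgroup of G. -/
open Set Pointwise

/-- The family S_k for the Cayley graph Γ(X) = X + S in an abelian group:
finite X with |X| ≥ k and at least k elements outside X + S. -/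
def SkAdd {G : Type*} [AddCommGroup G] (S : Set G) (k : ℕ) : Set (Set G) :=
  {X | X.Finite ∧ k ≤ X.ncard ∧ ∃ Y : Set G, Y.Finite ∧ Y.ncard = k ∧ Y ⊆ (X + S)ᶜ}

/-- S is k-separable. -/
def SepAdd {G : Type*} [AddCommGroup G] (S : Set G) (k : ℕ) : Prop := (SkAdd S k).Nonempty

/-- The k-isoperimetric connectivity κ_k(S). -/
noncomputable def kappaAdd {G : Type*} [AddCommGroup G] (S : Set G) (k : ℕ) : ℕ :=
  sInf ((fun X => (X + S).ncard - X.ncard) '' SkAdd S k)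

/-- X is a k-fragment of S. -/
def IsFragAdd {G : Type*} [AddCommGroup G] (S : Set G) (k : ℕ) (X : Set G) : Prop :=
  X ∈ SkAdd S k ∧ (X + S).ncard - X.ncard = kappaAdd S k

/-- X is a k-atom of S. -/
def IsAtomAdd {G : Type*} [AddCommGroup G] (S : Set G) (k : ℕ) (X : Set G) : Prop :=
  IsFragAdd S k X ∧ ∀ Y, IsFragAdd S k Y → X.ncard ≤ Y.ncard

/-- S is k-faithful: any k-atom A satisfies |A| ≤ |G \ (A + S)|. -/
def FaithfulAdd {G : Type*} [AddCommGroup G] (S : Set G) (k : ℕ) : Prop :=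
  ∀ A : Set G, IsAtomAdd S k A → ((A + S)ᶜ).Infinite ∨ A.ncard ≤ ((A + S)ᶜ).ncard

/-- A is an arithmetic progression {a, a+d, ..., a+md}. -/
def IsAP {G : Type*} [AddCommGroup G] (A : Set G) : Prop :=
  ∃ a d : G, ∃ m : ℕ, A = (fun i : ℕ => a + i • d) '' {i | i ≤ m}

/-- S is a Vosper subset: non-2-separable or κ₂(S) ≥ |S|. -/
def IsVosper {G : Type*} [AddCommGroup G] (S : Set G) : Prop :=
  ¬ SepAdd S 2 ∨ S.ncard ≤ kappaAdd S 2

/-- H is a hyper-atom of S: a subgroup which is a 1-fragment, of maximal cardinality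
among subgroups which are 1-fragments. -/
def IsHyperAtom {G : Type*} [AddCommGroup G] (S : Set G) (H : AddSubgroup G) : Prop :=
  IsFragAdd S 1 ↑H ∧
    ∀ K : AddSubgroup G, IsFragAdd S 1 ↑K → (K : Set G).ncard ≤ (H : Set G).ncard

/-- C is an H-component of S: a non-empty set of the form S ∩ (x + H). -/
def IsComponent {G : Type*} [AddCommGroup G] (H : AddSubgroup G) (S C : Set G) : Prop :=
  C.Nonempty ∧ ∃ x : G, C = S ∩ ({x} + (H : Set G))

/-- C is a smaller H-component of S: an H-component of minimal cardinality. -/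
def IsSmallerComponent {G : Type*} [AddCommGroup G] (H : AddSubgroup G) (S C : Set G) : Prop :=
  IsComponent H S C ∧ ∀ C', IsComponent H S C' → C.ncard ≤ C'.ncard

/-- The k-fold sumset kS = S + ⋯ + S (with 0S = {0}). -/
def iterSum {G : Type*} [AddCommGroup G] (S : Set G) : ℕ → Set G
  | 0 => {0}
  | n + 1 => iterSum S n + S

/-- A is aperiodic: its period {x : x + A = A} is trivial. -/
def IsAperiodic {G : Type*} [AddCommGroup G] (A : Set G) : Prop :=
  ∀ x : G, {x} + A = A → x = 0


/-!
Since `X ↦ |X + S|` is submodular and `F ↦ -(F + S)ᶜ` sends a `k`-fragment `F` to a set `Z`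
with `|Z + S| - |Z| ≤ κₖ`, a `k`-atom is contained in every `k`-fragment meeting it in at least
`k` points. Applied to the translates of `H`, every `x` with `|H ∩ (x + H)| ≥ 2` stabilises `H`;
so if `H` is not a subgroup, it is a Sidon set.

A Sidon 2-atom with `|H| ≥ 3` is impossible when `κ₂ < |S|`. For distinct nonzero `a, b ∈ H`,
`V = H ∪ (a + H) ∪ (b + H)` has `|V| ≥ 3|H| - 3`, while `|V + S|` is bounded in terms of
`|{0, a} + S|`. If `|V + S| ≥ |V| + κ₂`, then `{0, a}` is a 2-fragment smaller than `H`.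
Otherwise `V + S = G`, so `G` is small; then for each of the `2|H| - 2` nonzero `x` with
`H ∩ (x + H) ≠ ∅`, the complement of `H ∪ (x + H)` is `z - S` for some `z ∉ H + S`, and these
`z` are distinct, although only `|H|` points lie outside `H + S`.
-/

section Fragments

variable {G : Type*} [AddCommGroup G] {S X Y A F : Set G} {k : ℕ}

lemma mem_skAdd_iff_of_finite [Finite G] :
    X ∈ SkAdd S k ↔ k ≤ X.ncard ∧ (X + S).ncard + k ≤ Nat.card G := by
  rw [← ncard_add_ncard_compl (X + S)]
  constructor
  · rintro ⟨-, hk, Y, -, hY, hYsub⟩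
    exact ⟨hk, by have := ncard_le_ncard hYsub; omega⟩
  · rintro ⟨hk, hc⟩
    obtain ⟨Y, hYsub, hY⟩ := exists_subset_card_eq (show k ≤ (X + S)ᶜ.ncard by omega)
    exact ⟨toFinite X, hk, Y, toFinite Y, hY, hYsub⟩

lemma mem_skAdd_of_infinite [Infinite G] (hS : S.Finite) (hX : X.Finite) (hk : k ≤ X.ncard) :
    X ∈ SkAdd S k := by
  obtain ⟨Y, hYsub, hYfin, hY⟩ := (hX.add hS).infinite_compl.exists_subset_ncard_eq k
  exact ⟨hX, hk, Y, hYfin, hY, hYsub⟩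

lemma finite_and_card_lt_of_notMem_skAdd (hS : S.Finite) (hX : X.Finite) (hk : k ≤ X.ncard)
    (hXS : X ∉ SkAdd S k) : Finite G ∧ Nat.card G < (X + S).ncard + k := by
  rcases finite_or_infinite G with hG | hG
  · rw [mem_skAdd_iff_of_finite] at hXS
    exact ⟨hG, by omega⟩
  · exact (hXS (mem_skAdd_of_infinite hS hX hk)).elim

lemma mem_skAdd_of_subset (hXY : X ⊆ Y) (hY : Y ∈ SkAdd S k) (hk : k ≤ X.ncard) :
    X ∈ SkAdd S k := by
  obtain ⟨hYfin, -, Z, hZfin, hZ, hZsub⟩ := hY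
  exact ⟨hYfin.subset hXY, hk, Z, hZfin, hZ,
    hZsub.trans (compl_subset_compl.2 (add_subset_add_right hXY))⟩

lemma vadd_mem_skAdd (g : G) (hX : X ∈ SkAdd S k) : g +ᵥ X ∈ SkAdd S k := by
  obtain ⟨hXfin, hk, Y, hYfin, hY, hYsub⟩ := hX
  refine ⟨hXfin.vadd_set, by rwa [ncard_vadd_set], g +ᵥ Y, hYfin.vadd_set,
    by rwa [ncard_vadd_set], ?_⟩
  rw [vadd_add_assoc, ← vadd_set_compl]
  exact vadd_set_mono hYsub

lemma ncard_le_ncard_add (hS : S.Finite) (h0 : (0 : G) ∈ S) (hX : X.Finite) :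
    X.ncard ≤ (X + S).ncard :=
  ncard_le_ncard (subset_add_left X h0) (hX.add hS)

lemma ncard_add_kappaAdd_le (hS : S.Finite) (h0 : (0 : G) ∈ S) (hX : X ∈ SkAdd S k) :
    X.ncard + kappaAdd S k ≤ (X + S).ncard := by
  have hκ : kappaAdd S k ≤ (X + S).ncard - X.ncard := Nat.sInf_le ⟨X, hX, rfl⟩
  have := ncard_le_ncard_add hS h0 hX.1
  omega

lemma IsFragAdd.ncard_add_eq (hS : S.Finite) (h0 : (0 : G) ∈ S) (hF : IsFragAdd S k F) :
    (F + S).ncard = F.ncard + kappaAdd S k := by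
  have := ncard_le_ncard_add hS h0 hF.1.1
  have := hF.2
  omega

lemma isFragAdd_of_ncard_add_le (hS : S.Finite) (h0 : (0 : G) ∈ S) (hX : X ∈ SkAdd S k)
    (h : (X + S).ncard ≤ X.ncard + kappaAdd S k) : IsFragAdd S k X :=
  ⟨hX, by have := ncard_add_kappaAdd_le hS h0 hX; omega⟩

lemma IsFragAdd.vadd (g : G) (hF : IsFragAdd S k F) : IsFragAdd S k (g +ᵥ F) :=
  ⟨vadd_mem_skAdd g hF.1, by rw [vadd_add_assoc, ncard_vadd_set, ncard_vadd_set, hF.2]⟩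

lemma IsAtomAdd.vadd (g : G) (hA : IsAtomAdd S k A) : IsAtomAdd S k (g +ᵥ A) :=
  ⟨hA.1.vadd g, fun F hF => by rw [ncard_vadd_set]; exact hA.2 F hF⟩

lemma ncard_union_add_add_ncard_inter_add_le (hS : S.Finite) (hX : X.Finite) (hY : Y.Finite) :
    ((X ∪ Y) + S).ncard + ((X ∩ Y) + S).ncard ≤ (X + S).ncard + (Y + S).ncard := by
  rw [union_add, ← ncard_union_add_ncard_inter _ _ (hX.add hS) (hY.add hS)]
  exact Nat.add_le_add_left (ncard_le_ncard inter_add_subset ((hX.add hS).inter_of_left _)) _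

/-- The dual of a fragment: `Z = -(F + S)ᶜ` is a `k`-fragment of `S` of size
`|G| - |F| - κₖ`, because `Z + S` misses `-F`. -/
lemma IsAtomAdd.ncard_add_kappaAdd_add_ncard_le_card [Finite G] (hS : S.Finite)
    (h0 : (0 : G) ∈ S) (hA : IsAtomAdd S k A) (hF : IsFragAdd S k F) :
    F.ncard + kappaAdd S k + A.ncard ≤ Nat.card G := by
  set Z := -(F + S)ᶜ
  have hZS : Z + S ⊆ (-F)ᶜ := by
    rintro _ ⟨z, hz, s, hs, rfl⟩ hmem
    exact hz (by simpa using add_mem_add (mem_neg.1 hmem) hs)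
  have hZ : Z.ncard + (F + S).ncard = Nat.card G := by
    rw [ncard_neg, add_comm, ncard_add_ncard_compl]
  have hZS' : (Z + S).ncard + F.ncard ≤ Nat.card G := by
    have := ncard_le_ncard hZS
    rw [← ncard_add_ncard_compl (-F), ncard_neg] at *
    omega
  have hFS := hF.ncard_add_eq hS h0
  obtain ⟨hFk, hFc⟩ := mem_skAdd_iff_of_finite.1 hF.1
  have hZk : Z ∈ SkAdd S k := mem_skAdd_iff_of_finite.2 ⟨by omega, by omega⟩
  have := hA.2 Z (isFragAdd_of_ncard_add_le hS h0 hZk (by omega))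
  omega

lemma IsAtomAdd.subset_of_le_ncard_inter (hS : S.Finite) (h0 : (0 : G) ∈ S)
    (hA : IsAtomAdd S k A) (hF : IsFragAdd S k F) (hk : k ≤ (A ∩ F).ncard) : A ⊆ F := by
  have hAfin := hA.1.1.1
  have hFfin := hF.1.1
  have hI : A ∩ F ∈ SkAdd S k := mem_skAdd_of_subset inter_subset_left hA.1.1 hk
  have hsub := ncard_union_add_add_ncard_inter_add_le hS hAfin hFfin
  have hAS := hA.1.ncard_add_eq hS h0
  have hFS := hF.ncard_add_eq hS h0
  have hIS := ncard_add_kappaAdd_le hS h0 hI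
  have hcard := ncard_union_add_ncard_inter A F hAfin hFfin
  have hUS : (A ∪ F).ncard + kappaAdd S k ≤ ((A ∪ F) + S).ncard := by
    by_cases hU : A ∪ F ∈ SkAdd S k
    · exact ncard_add_kappaAdd_le hS h0 hU
    · have hkU : k ≤ (A ∪ F).ncard :=
        hk.trans (ncard_le_ncard (inter_subset_left.trans subset_union_left) (hAfin.union hFfin))
      obtain ⟨hG, hlt⟩ := finite_and_card_lt_of_notMem_skAdd hS (hAfin.union hFfin) hkU hU
      have := hA.ncard_add_kappaAdd_add_ncard_le_card hS h0 hF
      omega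
  have hfrag : IsFragAdd S k (A ∩ F) := isFragAdd_of_ncard_add_le hS h0 hI (by omega)
  exact inter_eq_left.1 (eq_of_subset_of_ncard_le inter_subset_left (hA.2 _ hfrag) hAfin)

lemma IsAtomAdd.vadd_eq_of_le_ncard_inter (hS : S.Finite) (h0 : (0 : G) ∈ S)
    (hA : IsAtomAdd S k A) {x : G} (hk : k ≤ (A ∩ (x +ᵥ A)).ncard) : x +ᵥ A = A :=
  ((hA.vadd x).subset_of_le_ncard_inter hS h0 hA.1 (by rwa [inter_comm])).antisymm
    (hA.subset_of_le_ncard_inter hS h0 (hA.1.vadd x) hk)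

lemma disjoint_vadd_neg_of_notMem_add {g : G} (hg : g ∉ X + S) : Disjoint X (g +ᵥ -S) := by
  rw [disjoint_left]
  intro x hx hxg
  rw [mem_vadd_set_iff_neg_vadd_mem, vadd_eq_add, mem_neg] at hxg
  exact hg (by simpa using add_mem_add hx hxg)

lemma ncard_add_kappaAdd_le_or_add_eq_univ (hS : S.Finite) (h0 : (0 : G) ∈ S)
    (hκ : kappaAdd S k + k ≤ S.ncard + 1) (hX : X.Finite) (hk : k ≤ X.ncard) :
    X.ncard + kappaAdd S k ≤ (X + S).ncard ∨ X + S = univ := by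
  by_cases hXS : X ∈ SkAdd S k
  · exact Or.inl (ncard_add_kappaAdd_le hS h0 hXS)
  obtain ⟨hG, hlt⟩ := finite_and_card_lt_of_notMem_skAdd hS hX hk hXS
  by_cases huniv : X + S = univ
  · exact Or.inr huniv
  obtain ⟨g, hg⟩ := (ne_univ_iff_exists_notMem _).1 huniv
  have hXg := ncard_union_eq (disjoint_vadd_neg_of_notMem_add hg) hX hS.neg.vadd_set
  have := ncard_le_card (X ∪ (g +ᵥ -S))
  rw [ncard_vadd_set, ncard_neg] at hXg
  omega

end Fragments

section Translates

variable {G : Type*} [AddGroup G] {H : Set G}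

lemma exists_addSubgroup_of_vadd_eq (h0 : (0 : G) ∈ H) (hH : ∀ a ∈ H, a +ᵥ H = H) :
    ∃ K : AddSubgroup G, H = K :=
  ⟨{ carrier := H
     add_mem' := fun {a _} ha hb => hH a ha ▸ vadd_mem_vadd_set hb
     zero_mem' := h0
     neg_mem' := fun {a} ha => by
       have h := (hH a ha).symm ▸ h0
       rwa [mem_vadd_set_iff_neg_vadd_mem, vadd_eq_add, add_zero] at h }, rfl⟩

lemma self_mem_vadd_set (h0 : (0 : G) ∈ H) (x : G) : x ∈ x +ᵥ H := by
  simpa using vadd_mem_vadd_set (a := x) h0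

end Translates

section Sidon

variable {G : Type*} [AddCommGroup G]

/-- Equivalently, the nonzero differences `h - h'` with `h, h' ∈ H` are pairwise distinct. -/
def IsSidon (H : Set G) : Prop :=
  ∀ x : G, x ≠ 0 → (H ∩ (x +ᵥ H)).Subsingleton

variable {H : Set G}

lemma IsAtomAdd.isSidon {S : Set G} (hS : S.Finite) (h0 : (0 : G) ∈ S) (hH : IsAtomAdd S 2 H)
    (h0H : (0 : G) ∈ H) {a : G} (ha : a ∈ H) (hne : a +ᵥ H ≠ H) : IsSidon H := by
  have hstab : ∀ x, ∀ u ∈ H ∩ (x +ᵥ H), ∀ v ∈ H ∩ (x +ᵥ H), u ≠ v → x +ᵥ H = H :=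
    fun x u hu v hv huv => hH.vadd_eq_of_le_ncard_inter hS h0
      ((one_lt_ncard (hH.1.1.1.inter_of_left _)).2 ⟨u, hu, v, hv, huv⟩)
  intro x hx0 u hu v hv
  by_contra huv
  have hxH : x +ᵥ H = H := hstab x u hu v hv huv
  refine hne (hstab a a ⟨ha, self_mem_vadd_set h0H a⟩ (a + x) ⟨?_, ?_⟩ (by simpa using hx0))
  · rw [← hxH, add_comm]
    exact vadd_mem_vadd_set ha
  · exact vadd_mem_vadd_set (hxH ▸ self_mem_vadd_set h0H x)

lemma IsSidon.ncard_vadd_inter_vadd_le_one (hH : IsSidon H) {a b : G} (hab : a ≠ b) :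
    ((a +ᵥ H) ∩ (b +ᵥ H)).ncard ≤ 1 := by
  have h := hH (-a + b) (by rwa [neg_add_eq_sub, sub_ne_zero, ne_comm])
  rw [show b +ᵥ H = a +ᵥ ((-a + b) +ᵥ H) by rw [vadd_vadd, add_neg_cancel_left],
    ← vadd_set_inter, ncard_vadd_set]
  rcases h.eq_empty_or_singleton with h | ⟨p, h⟩ <;> simp [h]

lemma IsSidon.three_mul_le_ncard_union (hH : IsSidon H) (hfin : H.Finite) {a b : G}
    (ha : a ≠ 0) (hb : b ≠ 0) (hab : a ≠ b) :
    3 * H.ncard ≤ (H ∪ (a +ᵥ H) ∪ (b +ᵥ H)).ncard + 3 := by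
  have h0a := hH.ncard_vadd_inter_vadd_le_one ha.symm
  have h0b := hH.ncard_vadd_inter_vadd_le_one hb.symm
  have hab' := hH.ncard_vadd_inter_vadd_le_one hab
  rw [zero_vadd] at h0a h0b
  have h1 := ncard_union_add_ncard_inter H (a +ᵥ H) hfin hfin.vadd_set
  have h2 := ncard_union_add_ncard_inter (H ∪ (a +ᵥ H)) (b +ᵥ H)
    (hfin.union hfin.vadd_set) hfin.vadd_set
  have h3 := ncard_union_le (H ∩ (b +ᵥ H)) ((a +ᵥ H) ∩ (b +ᵥ H))
  rw [union_inter_distrib_right] at h2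
  rw [ncard_vadd_set] at h1 h2
  omega

lemma IsSidon.ncard_le_two_of_vadd_subset_union (hH : IsSidon H) {x y : G} (hx : x ≠ 0)
    (hxy : x ≠ y) (hsub : x +ᵥ H ⊆ H ∪ (y +ᵥ H)) : H.ncard ≤ 2 := by
  have hsplit : x +ᵥ H = ((x +ᵥ H) ∩ ((0 : G) +ᵥ H)) ∪ ((x +ᵥ H) ∩ (y +ᵥ H)) := by
    rw [zero_vadd, ← inter_union_distrib_left, inter_eq_left.2 hsub]
  calc H.ncard = (x +ᵥ H).ncard := (ncard_vadd_set x H).symm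
    _ = (((x +ᵥ H) ∩ ((0 : G) +ᵥ H)) ∪ ((x +ᵥ H) ∩ (y +ᵥ H))).ncard := congrArg ncard hsplit
    _ ≤ ((x +ᵥ H) ∩ ((0 : G) +ᵥ H)).ncard + ((x +ᵥ H) ∩ (y +ᵥ H)).ncard := ncard_union_le _ _
    _ ≤ 1 + 1 := add_le_add (hH.ncard_vadd_inter_vadd_le_one hx)
      (hH.ncard_vadd_inter_vadd_le_one hxy)

lemma IsSidon.disjoint_neg (hH : IsSidon H) (h0 : (0 : G) ∈ H) :
    Disjoint (H \ {0}) (-(H \ {0})) := by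
  rw [disjoint_left]
  rintro x ⟨hx, hx0⟩ ⟨hnx, -⟩
  have hzero : (0 : G) ∈ x +ᵥ H := by simpa using vadd_mem_vadd_set (a := x) hnx
  exact hx0 (hH x hx0 ⟨hx, self_mem_vadd_set h0 x⟩ ⟨h0, hzero⟩)

end Sidon

section Sumsets

variable {G : Type*} [AddCommGroup G] {H S : Set G}

lemma ncard_union_vadd_add_add_le (hH : H.Finite) (hS : S.Finite) {x p : G}
    (hp : p ∈ H ∩ (x +ᵥ H)) : ((H ∪ (x +ᵥ H)) + S).ncard + S.ncard ≤ 2 * (H + S).ncard := by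
  obtain ⟨h, hh, hph⟩ := mem_vadd_set.1 hp.2
  have hsub : p +ᵥ S ⊆ (H + S) ∩ (x +ᵥ (H + S)) := by
    refine subset_inter (vadd_set_subset_add hp.1) ?_
    rw [← hph, vadd_eq_add, ← vadd_vadd]
    exact vadd_set_mono (vadd_set_subset_add hh)
  have hWfin := hH.add hS
  have e := ncard_union_add_ncard_inter (H + S) (x +ᵥ (H + S)) hWfin hWfin.vadd_set
  have i := ncard_le_ncard hsub (hWfin.inter_of_left _)
  rw [union_add, vadd_add_assoc]
  rw [ncard_vadd_set] at e i
  omega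

lemma ncard_union_vadd_union_vadd_add_le (hH : H.Finite) (hS : S.Finite) (h0 : (0 : G) ∈ H)
    {a b : G} (ha : a ∈ H) (hb : b ∈ H) :
    ((H ∪ (a +ᵥ H) ∪ (b +ᵥ H)) + S).ncard + S.ncard + (S ∪ (a +ᵥ S)).ncard
      ≤ 3 * (H + S).ncard := by
  rw [union_add, union_add, vadd_add_assoc, vadd_add_assoc]
  set W := H + S
  have hWfin : W.Finite := hH.add hS
  have hSW : S ⊆ W := subset_add_right S h0
  have h1 : a +ᵥ S ⊆ W ∩ (a +ᵥ W) := subset_inter (vadd_set_subset_add ha) (vadd_set_mono hSW)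
  have h2 : b +ᵥ (S ∪ (a +ᵥ S)) ⊆ (W ∪ (a +ᵥ W)) ∩ (b +ᵥ W) := by
    refine subset_inter ?_ (vadd_set_mono (union_subset hSW (vadd_set_subset_add ha)))
    rw [vadd_set_union, vadd_comm]
    exact union_subset_union (vadd_set_subset_add hb) (vadd_set_mono (vadd_set_subset_add hb))
  have e1 := ncard_union_add_ncard_inter W (a +ᵥ W) hWfin hWfin.vadd_set
  have e2 := ncard_union_add_ncard_inter (W ∪ (a +ᵥ W)) (b +ᵥ W)
    (hWfin.union hWfin.vadd_set) hWfin.vadd_set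
  have i1 := ncard_le_ncard h1 (hWfin.inter_of_left _)
  have i2 := ncard_le_ncard h2 ((hWfin.union hWfin.vadd_set).inter_of_left _)
  simp only [ncard_vadd_set] at e1 e2 i1 i2
  omega

end Sumsets

section Atoms

variable {G : Type*} [AddCommGroup G] {S A : Set G}

/-- `U = A ∪ (x + A)` satisfies `|U + S| ≤ |U| + κ₂` but is too large to be a 2-fragment, so
`U ∉ S₂`: `U + S` misses exactly one point `z`, and `Uᶜ ⊇ z - S` is an equality by counting. -/
lemma IsAtomAdd.card_eq_and_exists_compl_eq [Finite G] (hS : S.Finite) (h0 : (0 : G) ∈ S)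
    (hκ : kappaAdd S 2 < S.ncard) (hA : IsAtomAdd S 2 A)
    (hG : Nat.card G + 2 ≤ 3 * A.ncard + kappaAdd S 2) {x p : G} (hp : A ∩ (x +ᵥ A) = {p}) :
    Nat.card G = 2 * A.ncard + kappaAdd S 2 ∧ ∃ z ∉ A + S, (A ∪ (x +ᵥ A))ᶜ = z +ᵥ -S := by
  have hAfin := hA.1.1.1
  have hU : (A ∪ (x +ᵥ A)).ncard + 1 = 2 * A.ncard := by
    have := ncard_union_add_ncard_inter A (x +ᵥ A) hAfin hAfin.vadd_set
    rw [hp, ncard_singleton, ncard_vadd_set] at this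
    omega
  have hUS := ncard_union_vadd_add_add_le hAfin hS (hp ▸ mem_singleton p)
  have hAS := hA.1.ncard_add_eq hS h0
  have hA2 := hA.1.1.2.1
  have hfaith := hA.ncard_add_kappaAdd_add_ncard_le_card hS h0 hA.1
  have hUnot : A ∪ (x +ᵥ A) ∉ SkAdd S 2 := fun hU2 => by
    have := hA.ncard_add_kappaAdd_add_ncard_le_card hS h0
      (isFragAdd_of_ncard_add_le hS h0 hU2 (by omega))
    omega
  obtain ⟨-, hlt⟩ :=
    finite_and_card_lt_of_notMem_skAdd hS (hAfin.union hAfin.vadd_set) (by omega) hUnot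
  refine ⟨by omega, ?_⟩
  obtain ⟨z, hz⟩ :=
    ncard_eq_one.1 (show ((A ∪ (x +ᵥ A)) + S)ᶜ.ncard = 1 by rw [ncard_compl]; omega)
  have hzU : z ∉ (A ∪ (x +ᵥ A)) + S := by rw [← mem_compl_iff, hz]; rfl
  refine ⟨z, fun hzA => hzU (add_subset_add_right subset_union_left hzA), ?_⟩
  refine (eq_of_subset_of_ncard_le
    (disjoint_vadd_neg_of_notMem_add hzU).subset_compl_left ?_).symm
  rw [ncard_compl, ncard_vadd_set, ncard_neg]
  omega

lemma IsAtomAdd.false_of_isSidon_of_card_le [Finite G] (hS : S.Finite) (h0 : (0 : G) ∈ S)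
    (hκ : kappaAdd S 2 < S.ncard) (hA : IsAtomAdd S 2 A) (h0A : (0 : G) ∈ A)
    (hsidon : IsSidon A) (h3 : 3 ≤ A.ncard)
    (hG : Nat.card G + 2 ≤ 3 * A.ncard + kappaAdd S 2) : False := by
  set D := {x : G | x ≠ 0 ∧ (A ∩ (x +ᵥ A)).Nonempty}
  have hD : ∀ x ∈ D, Nat.card G = 2 * A.ncard + kappaAdd S 2 ∧
      ∃ z ∉ A + S, (A ∪ (x +ᵥ A))ᶜ = z +ᵥ -S := by
    rintro x ⟨hx0, p, hp⟩
    exact hA.card_eq_and_exists_compl_eq hS h0 hκ hG ((hsidon x hx0).eq_singleton_of_mem hp)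
  choose! z hzA hz using fun x hx => (hD x hx).2
  have hED : (A \ {0}) ∪ -(A \ {0}) ⊆ D := by
    rintro x (⟨hx, hx0⟩ | ⟨hx, hx0⟩)
    · exact ⟨hx0, x, hx, self_mem_vadd_set h0A x⟩
    · refine ⟨fun h => hx0 (by simp [h]), 0, h0A, ?_⟩
      simpa using vadd_mem_vadd_set (a := x) hx
  have hAdiff := ncard_sdiff_singleton_add_one h0A hA.1.1.1
  have hE : ((A \ {0}) ∪ -(A \ {0})).ncard + 2 = 2 * A.ncard := by
    rw [ncard_union_eq (hsidon.disjoint_neg h0A), ncard_neg]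
    omega
  have hinj : InjOn z D := by
    intro x hx y hy hxy
    by_contra hne
    have hU : A ∪ (x +ᵥ A) = A ∪ (y +ᵥ A) := compl_injective (by rw [hz x hx, hz y hy, hxy])
    have := hsidon.ncard_le_two_of_vadd_subset_union hx.1 hne (hU ▸ subset_union_right)
    omega
  obtain ⟨a, ha⟩ : (A \ {0}).Nonempty := nonempty_of_ncard_ne_zero (by omega)
  have hcard := (hD a (hED (Or.inl ha))).1
  have hDW := ncard_le_ncard_of_injOn (t := (A + S)ᶜ) z hzA hinj
  have hEW := ncard_le_ncard hED
  rw [ncard_compl, hA.1.ncard_add_eq hS h0] at hDW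
  omega

lemma IsAtomAdd.false_of_isSidon (hS : S.Finite) (h0 : (0 : G) ∈ S)
    (hκ : kappaAdd S 2 < S.ncard) (hA : IsAtomAdd S 2 A) (h0A : (0 : G) ∈ A)
    (hsidon : IsSidon A) (h3 : 3 ≤ A.ncard) : False := by
  have hAfin := hA.1.1.1
  have hAdiff := ncard_sdiff_singleton_add_one h0A hAfin
  obtain ⟨a, ⟨haA, ha0⟩, b, ⟨hbA, hb0⟩, hab⟩ :=
    (one_lt_ncard (s := A \ {0}) (hAfin.subset sdiff_subset)).1 (by omega)
  rw [mem_singleton_iff] at ha0 hb0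
  have hVfin : (A ∪ (a +ᵥ A) ∪ (b +ᵥ A)).Finite :=
    (hAfin.union hAfin.vadd_set).union hAfin.vadd_set
  have hV := hsidon.three_mul_le_ncard_union hAfin ha0 hb0 hab
  have hVS := ncard_union_vadd_union_vadd_add_le hAfin hS h0A haA hbA
  have hAS := hA.1.ncard_add_eq hS h0
  have hSa : S.ncard ≤ (S ∪ (a +ᵥ S)).ncard :=
    ncard_le_ncard subset_union_left (hS.union hS.vadd_set)
  rcases ncard_add_kappaAdd_le_or_add_eq_univ (k := 2) hS h0 (by omega) hVfin (by omega)
    with hle | huniv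
  · have hX : ({0, a} : Set G) + S = S ∪ (a +ᵥ S) := by
      rw [insert_eq, union_add, singleton_add, singleton_add]
      simp only [zero_add, image_id']
      rfl
    have hX2 : ({0, a} : Set G).ncard = 2 := ncard_pair (Ne.symm ha0)
    have hXS : ({0, a} : Set G) ∈ SkAdd S 2 := by
      rcases finite_or_infinite G with hG | hG
      · have := hA.ncard_add_kappaAdd_add_ncard_le_card hS h0 hA.1
        exact mem_skAdd_iff_of_finite.2 ⟨hX2.ge, by rw [hX]; omega⟩
      · exact mem_skAdd_of_infinite hS (toFinite _) hX2.ge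
    have := hA.2 _ (isFragAdd_of_ncard_add_le hS h0 hXS (by rw [hX, hX2]; omega))
    omega
  · have : Finite G := finite_univ_iff.1 (huniv ▸ hVfin.add hS)
    have hG : ((A ∪ (a +ᵥ A) ∪ (b +ᵥ A)) + S).ncard = Nat.card G := by
      rw [huniv, ncard_univ]
    exact hA.false_of_isSidon_of_card_le hS h0 hκ h0A hsidon h3 (by omega)

end Atoms

theorem stmt8_general {G : Type*} [AddCommGroup G] (S : Set G) (hfin : S.Finite)
    (h0 : (0 : G) ∈ S) (hkappa : kappaAdd S 2 < S.ncard)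
    (H : Set G) (hH : IsAtomAdd S 2 H) (h0H : (0 : G) ∈ H) (h3 : 3 ≤ H.ncard) :
    ∃ H' : AddSubgroup G, H = ↑H' := by
  by_contra hsub
  obtain ⟨a, ha, hne⟩ : ∃ a ∈ H, a +ᵥ H ≠ H := by
    by_contra! hstab
    exact hsub (exists_addSubgroup_of_vadd_eq h0H hstab)
  exact hH.false_of_isSidon hfin h0 hkappa h0H (hH.isSidon hfin h0 h0H ha hne) h3

theorem stmt8 {G : Type*} [AddCommGroup G] (S : Set G) (hfin : S.Finite)
    (h0 : (0 : G) ∈ S) (hgen : AddSubgroup.closure S = ⊤)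
    (hsep : SepAdd S 2) (hkappa : kappaAdd S 2 < S.ncard)
    (H : Set G) (hH : IsAtomAdd S 2 H) (h0H : (0 : G) ∈ H) (h3 : 3 ≤ H.ncard) :
    ∃ H' : AddSubgroup G, H = ↑H' :=
  stmt8_general S hfin h0 hkappa H hH h0H h3
end
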